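/- Let k ≥ 3 be an odd integer. Both P ∪ {e_1, e_2} and Q ∪ {e_1, e_2} are circuit-hyperplanes of the matroid N_k^L. -/

import Mathlib

open Set

namespace Matroid

variable {α : Type}

/-- Deletion of a set from a matroid. -/
def delete' (M : Matroid α) (D : Set α) : Matroid α := M ↾ (M.E \ D)

/-- Contraction of a set in a matroid. -/
def contract' (M : Matroid α) (C : Set α) : Matroid α := (M✶.delete' C)✶

/-- A circuit: a minimal dependent set. -/
def IsCircuit' (M : Matroid α) (C : Set α) : Prop :=
  M.Dep C ∧ ∀ D, D ⊂ C → M.Indep D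

/-- A cocircuit: a circuit of the dual. -/
def IsCocircuit' (M : Matroid α) (C : Set α) : Prop := M✶.IsCircuit' C

/-- A hyperplane: a flat whose rank is one less than the rank of the matroid. -/
def IsHyperplane (M : Matroid α) (H : Set α) : Prop :=
  M.IsFlat H ∧ ∃ I B, M.IsBasis I H ∧ M.IsBase B ∧ I.encard + 1 = B.encard

/-- A circuit-hyperplane: a set that is both a circuit and a hyperplane. -/
def IsCircuitHyperplane (M : Matroid α) (C : Set α) : Prop :=
  M.IsCircuit' C ∧ M.IsHyperplane C

/-- A free basis: a basis `B` such that `B ∪ {e}` is a circuit for every `e ∈ E(M) - B`. -/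
def IsFreeBase (M : Matroid α) (B : Set α) : Prop :=
  M.IsBase B ∧ ∀ e ∈ M.E \ B, M.IsCircuit' (insert e B)

/-- A connected matroid: the ground set is nonempty and every two distinct elements of the
ground set lie in a common circuit. -/
def IsConnected (M : Matroid α) : Prop :=
  M.E.Nonempty ∧ ∀ x ∈ M.E, ∀ y ∈ M.E, x ≠ y → ∃ C, M.IsCircuit' C ∧ x ∈ C ∧ y ∈ C

/-- `M` is a frame matroid: there is a matroid `M'` whose ground set is the union of (a copy of)
`E(M)` and a set `V` disjoint from it, such that `V` is a basis of `M'`, deleting `V` from `M'`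
yields (the copy of) `M`, and for every `e ∈ E(M)` the unique circuit of `M'` contained in
`V ∪ {e}` has at most three elements. -/
def IsFrame (M : Matroid α) : Prop :=
  ∃ (β : Type) (M' : Matroid (α ⊕ β)) (V : Set (α ⊕ β)),
    M'.Finite ∧
    M'.E = (Sum.inl '' M.E) ∪ V ∧
    Disjoint (Sum.inl '' M.E) V ∧
    M'.IsBase V ∧
    M'.delete' V = M.map Sum.inl Sum.inl_injective.injOn ∧
    ∀ e ∈ M.E, ∃ C, M'.IsCircuit' C ∧ C ⊆ insert (Sum.inl e) V ∧ C.encard ≤ 3 ∧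
      ∀ C', M'.IsCircuit' C' → C' ⊆ insert (Sum.inl e) V → C' = C

/-- `N` is a graphic matroid: there are a set `W` of vertices and an assignment of an unordered
pair of vertices to each element of the ground set, such that a subset `I` of the ground set is
independent exactly when every nonempty `J ⊆ I` uses strictly more vertices than it has edges
(i.e. the associated multigraph is a forest). -/
def IsGraphic (N : Matroid α) : Prop :=
  ∃ (W : Type) (f : α → Sym2 W),
    ∀ I : Set α, N.Indep I ↔ (I ⊆ N.E ∧ ∀ J ⊆ I, J.Nonempty →
      J.encard < {w : W | ∃ e ∈ J, w ∈ f e}.encard)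

/-- `M` is a lifted-graphic matroid: there is a matroid `M'` whose ground set is (a copy of)
`E(M)` plus one extra element `f`, such that `M' \ f = M` and `M' / f` is graphic. -/
def IsLiftedGraphic (M : Matroid α) : Prop :=
  ∃ M' : Matroid (α ⊕ Unit),
    M'.Finite ∧
    M'.E = (Sum.inl '' M.E) ∪ {Sum.inr ()} ∧
    M'.delete' {Sum.inr ()} = M.map Sum.inl Sum.inl_injective.injOn ∧
    (M'.contract' {Sum.inr ()}).IsGraphic

/-- `M` and `N` are isomorphic matroids. -/
def Iso' {β : Type} (M : Matroid α) (N : Matroid β) : Prop :=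
  ∃ (f : α → β) (hf : Set.InjOn f M.E), M.map f hf = N

end Matroid

section Graphs

/-- The edges of the graph `G_k`: `a i`, `b i`, `c i`, `d i` for `i : Fin k`
(with `i` representing the index `i+1` of the paper), together with `e1` and `e2`. -/
inductive Edge (k : ℕ) : Type where
  | a : Fin k → Edge k
  | b : Fin k → Edge k
  | c : Fin k → Edge k
  | d : Fin k → Edge k
  | e1 : Edge k
  | e2 : Edge k
deriving DecidableEq

/-- The vertices of `G_k`: `Sum.inl (i, false)` is `x_{i+1}` (so `Sum.inl (0, false)` is `s_1`),
`Sum.inl (i, true)` is `y_{i+1}` (so `Sum.inl (0, true)` is `s_2`), `Sum.inr false` is `t_1` and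
`Sum.inr true` is `t_2`.  There are `2k+2` vertices in all. -/
abbrev Vertex (k : ℕ) := (Fin k × Bool) ⊕ Bool

variable {k : ℕ}

/-- The tail of each edge of `G_k`. -/
def Edge.tail [NeZero k] : Edge k → Vertex k
  | .a i => .inl (i, false)
  | .b i => .inl (i, false)
  | .c i => .inl (i, true)
  | .d i => .inl (i, true)
  | .e1 => .inl (0, false)
  | .e2 => .inl (0, true)

/-- The head of each edge of `G_k`; the head `x_1` is the vertex `t_1 = Sum.inr false` and
the head `y_1` is the vertex `t_2 = Sum.inr true`. -/
def Edge.head [NeZero k] : Edge k → Vertex k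
  | .a i => if i + 1 = 0 then .inr false else .inl (i + 1, false)
  | .b i => if i + 1 = 0 then .inr true else .inl (i + 1, true)
  | .c i => if i + 1 = 0 then .inr false else .inl (i + 1, false)
  | .d i => if i + 1 = 0 then .inr true else .inl (i + 1, true)
  | .e1 => .inr false
  | .e2 => .inr true

/-- The set `P = {a_1, …, a_k, d_1, …, d_k}`. -/
def Pset (k : ℕ) : Set (Edge k) := {e | ∃ i, e = .a i ∨ e = .d i}

/-- The set `Q = {b_1, …, b_k, c_1, …, c_k}`. -/
def Qset (k : ℕ) : Set (Edge k) := {e | ∃ i, e = .b i ∨ e = .c i}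

/-- The last index of `Fin k`, representing the paper's index `k`. -/
def lastIdx (k : ℕ) [NeZero k] : Fin k :=
  ⟨k - 1, Nat.sub_lt (Nat.pos_of_ne_zero (NeZero.ne k)) Nat.one_pos⟩

/-- The group labels for the frame construction: `γ(a_k) = γ(b_k) = γ(c_k) = γ(d_k) = 2` and
`γ(e) = 1` for every other edge. -/
def gammaF [NeZero k] : Edge k → ℝ
  | .a i => if i = lastIdx k then 2 else 1
  | .b i => if i = lastIdx k then 2 else 1
  | .c i => if i = lastIdx k then 2 else 1
  | .d i => if i = lastIdx k then 2 else 1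
  | .e1 => 1
  | .e2 => 1

/-- The matrix `A_k` of the frame construction, with rows indexed by the vertices of `G_k` and
columns by its edges: the column of an edge `e` has entry `1` in the row of the tail of `e`,
entry `-γ(e)` in the row of the head of `e`, and `0` elsewhere. -/
def frameMatrix (k : ℕ) [NeZero k] : Matrix (Vertex k) (Edge k) ℝ :=
  fun v e => if v = e.tail then 1 else if v = e.head then -gammaF e else 0

/-- The group labels for the lifted construction: `γ(a_i) = γ(d_i) = 1` for all `i` and
`γ(e) = 0` for every other edge. -/
def gammaL : Edge k → ℝ
  | .a _ => 1
  | .d _ => 1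
  | _ => 0

/-- The matrix `A_k^L` of the lifted construction, with rows indexed by the vertices of `G_k`
together with one additional row: the column of an edge `e` has entry `1` in the row of the tail
of `e`, entry `-1` in the row of the head of `e`, entry `γ(e)` in the additional row, and `0`
elsewhere. -/
def liftMatrix (k : ℕ) [NeZero k] : Matrix (Vertex k ⊕ Unit) (Edge k) ℝ :=
  fun v e => match v with
  | .inl v => if v = e.tail then 1 else if v = e.head then -1 else 0
  | .inr _ => gammaL e

/-- `N` is the matroid on the column index set of the matrix `A` in which a set is independent
if and only if the corresponding columns of `A` are linearly independent over `ℝ`. -/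
def IsColMatroid {m n : Type} (A : Matrix m n ℝ) (N : Matroid n) : Prop :=
  N.E = Set.univ ∧
  ∀ I : Set n, N.Indep I ↔ LinearIndependent ℝ (fun e : I => fun v : m => A v (e : n))

/-- The vertex of the contracted graph `G_k / {e_1, e_2}` corresponding to a vertex of `G_k`:
`t_1` is identified with `s_1` and `t_2` with `s_2`, leaving the `2k` vertices `Fin k × Bool`. -/
def contractVertex [NeZero k] : Vertex k → Fin k × Bool
  | .inl p => p
  | .inr b => (0, b)

/-- The tail, in `G_k / {e_1, e_2}`, of an edge. -/
def Edge.ctail [NeZero k] (e : Edge k) : Fin k × Bool := contractVertex e.tail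

/-- The head, in `G_k / {e_1, e_2}`, of an edge. -/
def Edge.chead [NeZero k] (e : Edge k) : Fin k × Bool := contractVertex e.head

/-- `v` is a vertex of the subgraph of `G_k / {e_1, e_2}` formed by the edge set `S`. -/
def Touches [NeZero k] (S : Set (Edge k)) (v : Fin k × Bool) : Prop :=
  ∃ e ∈ S, e.ctail = v ∨ e.chead = v

/-- The degree of the vertex `v` in the subgraph of `G_k / {e_1, e_2}` with edge set `S`. -/
noncomputable def degreeIn [NeZero k] (S : Set (Edge k)) (v : Fin k × Bool) : ℕ :=
  {e ∈ S | e.ctail = v}.ncard + {e ∈ S | e.chead = v}.ncard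

/-- The edge set `S` forms a cycle of the multigraph `G_k / {e_1, e_2}`: the subgraph it
spans is connected and `2`-regular. -/
def IsCycleIn [NeZero k] (S : Set (Edge k)) : Prop :=
  S.Nonempty ∧ Edge.e1 ∉ S ∧ Edge.e2 ∉ S ∧
  (∀ v, Touches S v → degreeIn S v = 2) ∧
  (∀ T ⊆ S, T.Nonempty → (S \ T).Nonempty → ∃ v, Touches T v ∧ Touches (S \ T) v)

/-- The star `δ_G(v)` of a vertex `v` of the contracted graph `G_k / {e_1, e_2}`:
all edges of that graph incident with `v`. -/
def contractStar (k : ℕ) [NeZero k] (v : Fin k × Bool) : Set (Edge k) :=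
  {e | e ≠ .e1 ∧ e ≠ .e2 ∧ (e.ctail = v ∨ e.chead = v)}

/-- The star `δ(v)` of a vertex `v` of the graph `G_k`: all edges of `G_k` incident with `v`. -/
def star (k : ℕ) [NeZero k] (v : Vertex k) : Set (Edge k) :=
  {e | e.tail = v ∨ e.head = v}

end Graphs

/-!
The columns of `A_k^L` lie in the hyperplane on which the vertex coordinates sum to zero, so
`N_k^L` has rank at most `2k + 2`, the size of `H = P ∪ {e₁, e₂}` and of `H' = Q ∪ {e₁, e₂}`.
Read the rows of `A_k^L` as flow conservation at the vertices. A linear dependency supported on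
`H` is constant on each of the paths `a₁ … a_k` and `d₁ … d_k`, and the additional row ties the
two constants together; one supported on `H'` is constant along `Q`, which for odd `k` closes up
with `e₁` and `e₂` into a single cycle. Either way the dependencies form a line spanned by a
vector whose support is all of `H` (resp. `H'`), so `H` is a circuit. An edge `e ∉ H` is
separated from the columns of `H` by a row functional vanishing on them (the sum of the rows of
`s₁`, `t₁` and the `x_i` for `P`, the additional row for `Q`), so `H - f + e` is independent,
hence a base, for every `f ∈ H`; this makes `H` a hyperplane.
-/

open Matrix

namespace Matroid

variable {α : Type} {M : Matroid α} {C : Set α}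

theorem isCircuitHyperplane_of_indep_insert_sdiff (hCfin : C.Finite) (hC : M.Dep C)
    (hrank : ∀ I, M.Indep I → I.encard ≤ C.encard) {x₀ : α} (hx₀ : x₀ ∈ M.E \ C)
    (hins : ∀ f ∈ C, ∀ x ∈ M.E \ C, M.Indep (insert x (C \ {f}))) :
    M.IsCircuitHyperplane C := by
  have hdiff : ∀ f ∈ C, M.Indep (C \ {f}) := fun f hf ↦
    (hins f hf x₀ hx₀).subset (subset_insert _ _)
  obtain ⟨f, hf⟩ := hC.nonempty
  have hbasis : M.IsBasis (C \ {f}) C :=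
    (hdiff f hf).isBasis_of_forall_insert sdiff_subset fun e he ↦ by
      rwa [show e = f by simpa [he.1] using he.2, insert_sdiff_singleton, insert_eq_of_mem hf]
  refine ⟨⟨hC, fun D hD ↦ ?_⟩, ?_, C \ {f}, insert x₀ (C \ {f}), hbasis, ?_, ?_⟩
  · obtain ⟨g, hgC, hgD⟩ := exists_of_ssubset hD
    exact (hdiff g hgC).subset (subset_sdiff_singleton hD.subset hgD)
  · rw [isFlat_iff_closure_eq]
    refine (M.subset_closure C hC.subset_ground).antisymm' fun x hx ↦ by_contra fun hxC ↦ ?_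
    have hxE := mem_ground_of_mem_closure hx
    rw [← hbasis.closure_eq_closure,
      (hdiff f hf).mem_closure_iff_of_notMem (fun h ↦ hxC h.1)] at hx
    exact hx.not_indep (hins f hf x ⟨hxE, hxC⟩)
  · rw [isBase_iff_maximal_indep]
    refine ⟨hins f hf x₀ hx₀, fun J hJ hBJ ↦ ?_⟩
    refine ((hCfin.sdiff.insert x₀).eq_of_subset_of_encard_le hBJ ?_).symm.le
    rw [encard_insert_of_notMem (fun h ↦ hx₀.2 h.1), encard_sdiff_singleton_add_one hf]
    exact hrank J hJ
  · exact (encard_insert_of_notMem fun h ↦ hx₀.2 h.1).symm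

end Matroid

namespace IsColMatroid

variable {m n : Type} {A : Matrix m n ℝ} {N : Matroid n}

theorem encard_add_one_le [Fintype m] (hN : IsColMatroid A N) {w : m → ℝ} (hw : w ≠ 0)
    (hwA : w ᵥ* A = 0) {I : Set n} (hI : N.Indep I) : I.encard + 1 ≤ Fintype.card m := by
  let φ : Module.Dual ℝ (m → ℝ) := dotProductBilin ℝ ℝ w
  have hφ : φ ≠ 0 := fun h ↦ hw (dotProduct_self_eq_zero.1 (LinearMap.congr_fun h w))
  have hcol : ∀ e, (fun v ↦ A v e) ∈ LinearMap.ker φ := fun e ↦ by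
    simpa [φ, vecMul, dotProduct] using congr_fun hwA e
  have hli : LinearIndepOn ℝ (fun e ↦ (⟨fun v ↦ A v e, hcol e⟩ : LinearMap.ker φ)) I :=
    LinearIndependent.of_comp (LinearMap.ker φ).subtype ((hN.2 I).1 hI)
  have hrank := hli.encard_le_toENat_rank
  rw [← Module.finrank_eq_rank, Cardinal.toENat_nat] at hrank
  have hker := Module.Dual.finrank_ker_add_one_of_ne_zero hφ
  rw [Module.finrank_fintype_fun_eq_card] at hker
  rw [← hker]
  push_cast
  gcongr

variable [Fintype n]

theorem indep_iff (hN : IsColMatroid A N) (S : Set n) :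
    N.Indep S ↔ ∀ c : n → ℝ, (∀ e ∉ S, c e = 0) → A *ᵥ c = 0 → c = 0 := by
  have hcomb : ∀ l : n →₀ ℝ, Finsupp.linearCombination ℝ (fun e v ↦ A v e) l = A *ᵥ l := by
    intro l
    ext v
    simp [Finsupp.linearCombination_apply, Finsupp.sum_fintype, Matrix.mulVec, dotProduct,
      mul_comm]
  rw [hN.2, linearIndependent_set_coe_iff (v := fun e v ↦ A v e), linearIndepOn_iff]
  simp only [Finsupp.mem_supported', hcomb]
  refine ⟨fun h c hc hAc ↦ ?_, fun h l hl hAl ↦ DFunLike.coe_injective (h l hl hAl)⟩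
  simpa using congr_arg (⇑) (h (Finsupp.equivFunOnFinite.symm c) hc hAc)

theorem dep_of_mulVec_eq_zero (hN : IsColMatroid A N) {C : Set n} {g : n → ℝ}
    (hg : A *ᵥ g = 0) (hg0 : g ≠ 0) (hgC : ∀ e ∉ C, g e = 0) : N.Dep C :=
  ⟨fun hC ↦ hg0 ((hN.indep_iff C).1 hC g hgC hg), hN.1 ▸ subset_univ C⟩

theorem indep_sdiff_singleton (hN : IsColMatroid A N) {C : Set n} {g : n → ℝ} {f : n}
    (hker : ∀ c, A *ᵥ c = 0 → (∀ e ∉ C, c e = 0) → ∃ t : ℝ, c = t • g) (hgf : g f ≠ 0) :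
    N.Indep (C \ {f}) := by
  refine (hN.indep_iff _).2 fun c hc hAc ↦ ?_
  obtain ⟨t, rfl⟩ := hker c hAc fun e he ↦ hc e fun h ↦ he h.1
  have : t * g f = 0 := hc f fun h ↦ h.2 rfl
  simp [(mul_eq_zero.1 this).resolve_right hgf]

theorem indep_insert_of_vecMul [Fintype m] (hN : IsColMatroid A N) {I : Set n} {x : n}
    (hI : N.Indep I) {w : m → ℝ} (hwI : ∀ e ∈ I, (w ᵥ* A) e = 0) (hwx : (w ᵥ* A) x ≠ 0) :
    N.Indep (insert x I) := by
  refine (hN.indep_iff _).2 fun c hc hAc ↦ ?_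
  have hcI : ∀ e ∉ I, e ≠ x → c e = 0 := fun e heI hex ↦ hc e (by simp [hex, heI])
  have hcx : c x = 0 := by
    have h : (w ᵥ* A) ⬝ᵥ c = 0 := by rw [← dotProduct_mulVec, hAc, dotProduct_zero]
    rw [dotProduct, Finset.sum_eq_single x] at h
    · exact (mul_eq_zero.1 h).resolve_left hwx
    · intro e _ hex
      by_cases heI : e ∈ I
      · rw [hwI e heI, zero_mul]
      · rw [hcI e heI hex, mul_zero]
    · simp
  refine (hN.indep_iff I).1 hI c (fun e heI ↦ ?_) hAc
  by_cases hex : e = x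
  · exact hex ▸ hcx
  · exact hcI e heI hex

theorem isCircuitHyperplane [Fintype m] (hN : IsColMatroid A N) {C : Set n} {g : n → ℝ}
    {w : m → ℝ} {x₀ : n} (hrank : ∀ I, N.Indep I → I.encard ≤ C.encard) (hC : C.Nonempty)
    (hg : A *ᵥ g = 0) (hgC : ∀ e, g e ≠ 0 ↔ e ∈ C)
    (hker : ∀ c, A *ᵥ c = 0 → (∀ e ∉ C, c e = 0) → ∃ t : ℝ, c = t • g)
    (hwC : ∀ e, (w ᵥ* A) e = 0 ↔ e ∈ C) (hx₀ : x₀ ∉ C) : N.IsCircuitHyperplane C := by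
  obtain ⟨e, he⟩ := hC
  have hdep : N.Dep C := hN.dep_of_mulVec_eq_zero hg (fun h ↦ (hgC e).2 he (by simp [h]))
    fun e he ↦ not_not.1 (mt (hgC e).1 he)
  refine Matroid.isCircuitHyperplane_of_indep_insert_sdiff C.toFinite hdep hrank
    ⟨hN.1 ▸ mem_univ x₀, hx₀⟩ fun f hf x hx ↦ ?_
  exact hN.indep_insert_of_vecMul (hN.indep_sdiff_singleton hker ((hgC f).2 hf))
    (fun e he ↦ (hwC e).2 he.1) (mt (hwC x).1 hx.2)

end IsColMatroid

section Fin

variable {k : ℕ} [NeZero k]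

theorem Fin.add_one_eq_zero_iff {j : Fin k} : j + 1 = 0 ↔ (j : ℕ) + 1 = k := by
  have := j.isLt
  rw [Fin.ext_iff, Fin.val_add, Fin.val_one', Nat.add_mod_mod, Fin.val_zero]
  constructor
  · intro h
    by_contra h'
    rw [Nat.mod_eq_of_lt (by omega)] at h
    omega
  · intro h
    rw [h, Nat.mod_self]

theorem Fin.val_add_one_of_add_one_ne_zero {j : Fin k} (h : j + 1 ≠ 0) :
    ((j + 1 : Fin k) : ℕ) = j + 1 :=
  Fin.val_add_one_of_lt' (lt_of_le_of_ne j.isLt (mt Fin.add_one_eq_zero_iff.2 h))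

theorem Fin.add_one_eq_zero_iff_eq_lastIdx {j : Fin k} : j + 1 = 0 ↔ j = lastIdx k := by
  rw [Fin.add_one_eq_zero_iff, Fin.ext_iff]
  have := NeZero.ne k
  simp only [lastIdx]
  omega

theorem Fin.eq_zero_or_eq_add_one (i : Fin k) : i = 0 ∨ ∃ j : Fin k, j + 1 ≠ 0 ∧ i = j + 1 := by
  by_cases hi : i = 0
  · exact .inl hi
  · exact .inr ⟨i - 1, by simpa using hi, by simp⟩

theorem Fin.induction_add_one {p : Fin k → Prop} (zero : p 0)
    (succ : ∀ j : Fin k, j + 1 ≠ 0 → p j → p (j + 1)) (j : Fin k) : p j := by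
  obtain ⟨n, hn⟩ := j
  induction n with
  | zero => exact zero
  | succ n ih =>
    have hne : (⟨n, by omega⟩ + 1 : Fin k) ≠ 0 := by
      rw [Ne, Fin.add_one_eq_zero_iff, Fin.val_mk]
      omega
    convert succ _ hne (ih _)
    exact (Fin.val_add_one_of_add_one_ne_zero hne).symm

end Fin

namespace Edge

variable {k : ℕ}

def equivSum (k : ℕ) : Edge k ≃ (Fin k ⊕ Fin k) ⊕ (Fin k ⊕ Fin k) ⊕ Bool where
  toFun
    | a i => .inl (.inl i)
    | b i => .inl (.inr i)
    | c i => .inr (.inl (.inl i))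
    | d i => .inr (.inl (.inr i))
    | e1 => .inr (.inr false)
    | e2 => .inr (.inr true)
  invFun
    | .inl (.inl i) => a i
    | .inl (.inr i) => b i
    | .inr (.inl (.inl i)) => c i
    | .inr (.inl (.inr i)) => d i
    | .inr (.inr false) => e1
    | .inr (.inr true) => e2
  left_inv e := by cases e <;> rfl
  right_inv x := by rcases x with (i | i) | (i | i) | _ | _ <;> rfl

instance : Fintype (Edge k) := Fintype.ofEquiv _ (equivSum k).symm

theorem sum_univ {M : Type} [AddCommMonoid M] (f : Edge k → M) :
    ∑ e, f e = ∑ j, f (a j) + ∑ j, f (b j) + ∑ j, f (c j) + ∑ j, f (d j) + f e1 + f e2 := by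
  rw [← (equivSum k).symm.sum_comp]
  simp only [Fintype.sum_sum_type, Fintype.sum_bool, equivSum, Equiv.coe_fn_symm_mk]
  abel

theorem encard_Pset_union : (Pset k ∪ {e1, e2}).encard = 2 * k + 2 := by
  have hP : Pset k = range a ∪ range d := by ext; simp [Pset, exists_or, eq_comm]
  have ha : Function.Injective (a (k := k)) := fun _ _ ↦ a.inj
  have hd : Function.Injective (d (k := k)) := fun _ _ ↦ d.inj
  rw [hP, encard_union_eq, encard_union_eq, ← image_univ, ← image_univ, ha.encard_image,
    hd.encard_image, encard_univ, encard_pair (by simp)]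
  · simp [two_mul]
  · exact disjoint_left.2 (by rintro _ ⟨i, rfl⟩ ⟨j, h⟩; cases h)
  · exact disjoint_left.2 (by rintro _ (⟨i, rfl⟩ | ⟨i, rfl⟩) (h | h) <;> cases h)

theorem encard_Qset_union : (Qset k ∪ {e1, e2}).encard = 2 * k + 2 := by
  have hQ : Qset k = range b ∪ range c := by ext; simp [Qset, exists_or, eq_comm]
  have hb : Function.Injective (b (k := k)) := fun _ _ ↦ b.inj
  have hc : Function.Injective (c (k := k)) := fun _ _ ↦ c.inj
  rw [hQ, encard_union_eq, encard_union_eq, ← image_univ, ← image_univ, hb.encard_image,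
    hc.encard_image, encard_univ, encard_pair (by simp)]
  · simp [two_mul]
  · exact disjoint_left.2 (by rintro _ ⟨i, rfl⟩ ⟨j, h⟩; cases h)
  · exact disjoint_left.2 (by rintro _ (⟨i, rfl⟩ | ⟨i, rfl⟩) (h | h) <;> cases h)

variable [NeZero k]

theorem tail_ne_head (e : Edge k) : e.tail ≠ e.head := by
  have hloop : ∀ j : Fin k, j + 1 ≠ 0 → j ≠ j + 1 := fun j hj h ↦ by
    have := Fin.val_add_one_of_add_one_ne_zero hj
    rw [← h] at this
    omega
  cases e <;> simp only [tail, head] <;> try split_ifs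
  all_goals simp [*]

theorem liftMatrix_inl (v : Vertex k) (e : Edge k) :
    liftMatrix k (.inl v) e = (if v = e.tail then 1 else 0) - (if v = e.head then 1 else 0) := by
  simp only [liftMatrix]
  by_cases ht : v = e.tail
  · simp [ht, e.tail_ne_head]
  · simp only [ht, if_false]
    split_ifs <;> norm_num

theorem liftMatrix_mulVec_inl (x : Edge k → ℝ) (v : Vertex k) :
    (liftMatrix k *ᵥ x) (.inl v) = ∑ e with e.tail = v, x e - ∑ e with e.head = v, x e := by
  simp only [mulVec, dotProduct, liftMatrix_inl, sub_mul, Finset.sum_sub_distrib, ite_mul,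
    one_mul, zero_mul, Finset.sum_filter, eq_comm]

@[simp]
theorem liftMatrix_mulVec_inr (x : Edge k → ℝ) (u : Unit) :
    (liftMatrix k *ᵥ x) (.inr u) = ∑ j, x (a j) + ∑ j, x (d j) := by
  simp [mulVec, dotProduct, liftMatrix, sum_univ, gammaL]

theorem vecMul_liftMatrix (w : Vertex k → ℝ) (r : ℝ) (e : Edge k) :
    (Sum.elim w (fun _ ↦ r) ᵥ* liftMatrix k) e = w e.tail - w e.head + r * gammaL e := by
  rw [vecMul, dotProduct, Fintype.sum_sum_type]
  simp only [Sum.elim_inl, Sum.elim_inr, liftMatrix_inl, mul_sub, mul_ite, mul_one, mul_zero,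
    Finset.sum_sub_distrib, Finset.sum_ite_eq', Finset.mem_univ, if_true, Fintype.sum_unique]
  rfl

variable (x : Edge k → ℝ) {j : Fin k}

@[simp]
theorem liftMatrix_mulVec_s₁ :
    (liftMatrix k *ᵥ x) (.inl (.inl (0, false))) = x (a 0) + x (b 0) + x e1 := by
  rw [liftMatrix_mulVec_inl, Finset.sum_filter, Finset.sum_filter, sum_univ, sum_univ]
  simp [tail, head, ite_eq_iff]

@[simp]
theorem liftMatrix_mulVec_s₂ :
    (liftMatrix k *ᵥ x) (.inl (.inl (0, true))) = x (c 0) + x (d 0) + x e2 := by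
  rw [liftMatrix_mulVec_inl, Finset.sum_filter, Finset.sum_filter, sum_univ, sum_univ]
  simp [tail, head, ite_eq_iff]

@[simp]
theorem liftMatrix_mulVec_x (hj : j + 1 ≠ 0) :
    (liftMatrix k *ᵥ x) (.inl (.inl (j + 1, false))) =
      x (a (j + 1)) + x (b (j + 1)) - (x (a j) + x (c j)) := by
  have hj' : ∀ i : Fin k, (¬i + 1 = 0 ∧ i = j) ↔ i = j := fun i ↦ ⟨And.right, fun h ↦ ⟨h ▸ hj, h⟩⟩
  rw [liftMatrix_mulVec_inl, Finset.sum_filter, Finset.sum_filter, sum_univ, sum_univ]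
  simp [tail, head, ite_eq_iff, hj', hj.symm]

@[simp]
theorem liftMatrix_mulVec_y (hj : j + 1 ≠ 0) :
    (liftMatrix k *ᵥ x) (.inl (.inl (j + 1, true))) =
      x (c (j + 1)) + x (d (j + 1)) - (x (b j) + x (d j)) := by
  have hj' : ∀ i : Fin k, (¬i + 1 = 0 ∧ i = j) ↔ i = j := fun i ↦ ⟨And.right, fun h ↦ ⟨h ▸ hj, h⟩⟩
  rw [liftMatrix_mulVec_inl, Finset.sum_filter, Finset.sum_filter, sum_univ, sum_univ]
  simp [tail, head, ite_eq_iff, hj', hj.symm]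

@[simp]
theorem liftMatrix_mulVec_t₁ :
    (liftMatrix k *ᵥ x) (.inl (.inr false)) = -(x (a (lastIdx k)) + x (c (lastIdx k)) + x e1) := by
  rw [liftMatrix_mulVec_inl, Finset.sum_filter, Finset.sum_filter, sum_univ, sum_univ]
  simp [tail, head, ite_eq_iff, Fin.add_one_eq_zero_iff_eq_lastIdx]

@[simp]
theorem liftMatrix_mulVec_t₂ :
    (liftMatrix k *ᵥ x) (.inl (.inr true)) = -(x (b (lastIdx k)) + x (d (lastIdx k)) + x e2) := by
  rw [liftMatrix_mulVec_inl, Finset.sum_filter, Finset.sum_filter, sum_univ, sum_univ]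
  simp [tail, head, ite_eq_iff, Fin.add_one_eq_zero_iff_eq_lastIdx]

def pDependency : Edge k → ℝ
  | a _ => 1
  | b _ => 0
  | c _ => 0
  | d _ => -1
  | e1 => -1
  | e2 => 1

def qDependency : Edge k → ℝ
  | a _ => 0
  | b _ => 1
  | c _ => 1
  | d _ => 0
  | e1 => -1
  | e2 => -1

theorem liftMatrix_mulVec_pDependency : liftMatrix k *ᵥ pDependency = 0 := by
  funext r
  rcases r with (⟨i, _ | _⟩ | _ | _) | _ <;>
    try obtain rfl | ⟨j, hj, rfl⟩ := Fin.eq_zero_or_eq_add_one i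
  all_goals simp [pDependency, *]

theorem liftMatrix_mulVec_qDependency : liftMatrix k *ᵥ qDependency = 0 := by
  funext r
  rcases r with (⟨i, _ | _⟩ | _ | _) | _ <;>
    try obtain rfl | ⟨j, hj, rfl⟩ := Fin.eq_zero_or_eq_add_one i
  all_goals simp [qDependency, *]

variable {x}

theorem eq_smul_pDependency (hx : liftMatrix k *ᵥ x = 0)
    (hP : ∀ e ∉ Pset k ∪ {e1, e2}, x e = 0) : x = (-x e1) • pDependency := by
  have hb : ∀ j, x (b j) = 0 := fun j ↦ hP _ (by simp [Pset])
  have hc : ∀ j, x (c j) = 0 := fun j ↦ hP _ (by simp [Pset])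
  have ha : ∀ j, x (a j) = -x e1 := by
    refine Fin.induction_add_one ?_ fun j hj ih ↦ ?_
    · have h := liftMatrix_mulVec_s₁ x
      rw [hx, Pi.zero_apply, hb] at h
      linarith
    · have h := liftMatrix_mulVec_x x hj
      rw [hx, Pi.zero_apply, hb, hc] at h
      linarith
  have hd : ∀ j, x (d j) = -x e2 := by
    refine Fin.induction_add_one ?_ fun j hj ih ↦ ?_
    · have h := liftMatrix_mulVec_s₂ x
      rw [hx, Pi.zero_apply, hc] at h
      linarith
    · have h := liftMatrix_mulVec_y x hj
      rw [hx, Pi.zero_apply, hb, hc] at h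
      linarith
  have he : x e2 = -x e1 := by
    have h := liftMatrix_mulVec_inr x ()
    simp only [hx, Pi.zero_apply, ha, hd, Finset.sum_const, Finset.card_univ, Fintype.card_fin,
      nsmul_eq_mul, ← mul_add] at h
    have hk : (k : ℝ) ≠ 0 := Nat.cast_ne_zero.2 (NeZero.ne k)
    linarith [(mul_eq_zero.1 h.symm).resolve_left hk]
  funext e
  cases e <;> simp [pDependency, ha, hb, hc, hd, he]

theorem eq_smul_qDependency (hodd : Odd k) (hx : liftMatrix k *ᵥ x = 0)
    (hQ : ∀ e ∉ Qset k ∪ {e1, e2}, x e = 0) : x = (-x e1) • qDependency := by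
  have ha : ∀ j, x (a j) = 0 := fun j ↦ hQ _ (by simp [Qset])
  have hd : ∀ j, x (d j) = 0 := fun j ↦ hQ _ (by simp [Qset])
  -- `Q` forms two paths, each alternating between the `x`- and the `y`-vertices
  have hbc : ∀ j : Fin k, x (b j) = -(if Even (j : ℕ) then x e1 else x e2) ∧
      x (c j) = -(if Even (j : ℕ) then x e2 else x e1) := by
    refine Fin.induction_add_one ?_ fun j hj ih ↦ ?_
    · have h₁ := liftMatrix_mulVec_s₁ x
      have h₂ := liftMatrix_mulVec_s₂ x
      rw [hx, Pi.zero_apply, ha] at h₁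
      rw [hx, Pi.zero_apply, hd] at h₂
      simp only [Fin.val_zero, Even.zero, if_true]
      constructor <;> linarith
    · have h₁ := liftMatrix_mulVec_x x hj
      have h₂ := liftMatrix_mulVec_y x hj
      rw [hx, Pi.zero_apply, ha, ha] at h₁
      rw [hx, Pi.zero_apply, hd, hd] at h₂
      simp only [Fin.val_add_one_of_add_one_ne_zero hj, Nat.even_add_one]
      by_cases hev : Even (j : ℕ) <;>
        simp only [hev, not_true_eq_false, not_false_eq_true, if_true, if_false] at ih ⊢ <;>
        constructor <;> linarith [ih.1, ih.2]
  have he : x e2 = x e1 := by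
    have h := liftMatrix_mulVec_t₁ x
    have hlast : Even ((lastIdx k : Fin k) : ℕ) := by
      obtain ⟨m, hm⟩ := hodd
      exact ⟨m, by simp [lastIdx, hm]; ring⟩
    rw [hx, Pi.zero_apply, ha, (hbc _).2, if_pos hlast] at h
    linarith
  funext e
  cases e with
  | b j | c j => by_cases hev : Even (j : ℕ) <;> simp [qDependency, hbc, hev, he]
  | _ => simp [qDependency, ha, hd, he]

theorem encard_le_of_indep {N : Matroid (Edge k)} (hN : IsColMatroid (liftMatrix k) N)
    {I : Set (Edge k)} (hI : N.Indep I) : I.encard ≤ 2 * k + 2 := by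
  have h := hN.encard_add_one_le (w := Sum.elim (fun _ ↦ 1) (fun _ ↦ 0))
    (fun h ↦ by simpa using congrFun h (.inl (.inr false)))
    (funext fun e ↦ by simp [vecMul_liftMatrix]) hI
  simp only [Fintype.card_sum, Fintype.card_prod, Fintype.card_fin, Fintype.card_bool,
    Fintype.card_unit] at h
  rw [show k * 2 + 2 + 1 = (2 * k + 2 : ℕ) + 1 by ring, Nat.cast_add, Nat.cast_one,
    ENat.add_le_add_iff_right ENat.one_ne_top] at h
  simpa using h

theorem vecMul_liftMatrix_xSide_eq_zero_iff (e : Edge k) :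
    (Sum.elim (fun v ↦ if (contractVertex v).2 then 0 else 1) (fun _ ↦ 0) ᵥ* liftMatrix k) e = 0 ↔
      e ∈ Pset k ∪ {e1, e2} := by
  rw [vecMul_liftMatrix]
  cases e <;> simp only [tail, head, apply_ite contractVertex] <;>
    simp [contractVertex, Pset, apply_ite Prod.snd]

theorem vecMul_liftMatrix_extraRow_eq_zero_iff (e : Edge k) :
    (Sum.elim (fun _ ↦ 0) (fun _ ↦ 1) ᵥ* liftMatrix k) e = 0 ↔ e ∈ Qset k ∪ {e1, e2} := by
  rw [vecMul_liftMatrix]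
  cases e <;> simp [gammaL, Qset]

end Edge

theorem circuit_hyperplanes_of_NkL_general (k : ℕ) [NeZero k] (hodd : Odd k)
    (N : Matroid (Edge k)) (hN : IsColMatroid (liftMatrix k) N) :
    N.IsCircuitHyperplane (Pset k ∪ {Edge.e1, Edge.e2}) ∧
    N.IsCircuitHyperplane (Qset k ∪ {Edge.e1, Edge.e2}) := by
  constructor
  · refine hN.isCircuitHyperplane (x₀ := .b 0)
      (fun I hI ↦ Edge.encard_Pset_union.symm ▸ Edge.encard_le_of_indep hN hI) ⟨.e1, by simp⟩
      Edge.liftMatrix_mulVec_pDependency (fun e ↦ by cases e <;> simp [Edge.pDependency, Pset])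
      (fun x hx hP ↦ ⟨_, Edge.eq_smul_pDependency hx hP⟩)
      Edge.vecMul_liftMatrix_xSide_eq_zero_iff (by simp [Pset])
  · refine hN.isCircuitHyperplane (x₀ := .a 0)
      (fun I hI ↦ Edge.encard_Qset_union.symm ▸ Edge.encard_le_of_indep hN hI) ⟨.e1, by simp⟩
      Edge.liftMatrix_mulVec_qDependency (fun e ↦ by cases e <;> simp [Edge.qDependency, Qset])
      (fun x hx hQ ↦ ⟨_, Edge.eq_smul_qDependency hodd hx hQ⟩)
      Edge.vecMul_liftMatrix_extraRow_eq_zero_iff (by simp [Qset])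

/-- Both `P ∪ {e_1, e_2}` and `Q ∪ {e_1, e_2}` are circuit-hyperplanes of `N_k^L`. -/
theorem circuit_hyperplanes_of_NkL (k : ℕ) [NeZero k] (hk : 3 ≤ k) (hodd : Odd k)
    (N : Matroid (Edge k)) (hN : IsColMatroid (liftMatrix k) N) :
    N.IsCircuitHyperplane (Pset k ∪ {Edge.e1, Edge.e2}) ∧
    N.IsCircuitHyperplane (Qset k ∪ {Edge.e1, Edge.e2}) :=
  circuit_hyperplanes_of_NkL_general k hodd N hN
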